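/- arXiv:2605.17966 — 6 statements merged into one kernel-verified Lean document; each statement's English description precedes it below -/
import Mathlib

section
/- Suppose q ≥ 1 and Z Zᵀ is invertible. Fix A⋆ ∈ ℝ^{q×d} and B⋆ ∈ ℝ^{q×m}. Then the following are equivalent: (i) for every A ∈ ℝ^{q×d} and B ∈ ℝ^{q×m}, A Z + B U = A⋆ Z + B⋆ U implies B = B⋆ (sample-identifiability of the control channel); (ii) the matrix U_⊥ U_⊥ᵀ = U M_Z Uᵀ is positive definite. -/
/-!
For the residual maker `M_Z = 1 - Zᵀ (Z Zᵀ)⁻¹ Z`, a matrix `C` satisfies `C M_Z = 0` exactly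
when its rows lie in the row space of `Z`, i.e. `C = A Z` for some `A`. Hence the control channel is identifiable
iff no nonzero `C` has `C U M_Z = 0`, i.e. iff `x ↦ xᵀ U M_Z` is injective. Since `M_Z` is a
symmetric idempotent, `U M_Z Uᵀ = (U M_Z)(U M_Z)ᵀ`, and a Gram matrix `W Wᵀ` is positive definite
exactly when `x ↦ xᵀ W` is injective.
-/

open Matrix

namespace Matrix

variable {R ι m n k : Type*}

theorem posDef_mul_conjTranspose_self_iff [Field R] [PartialOrder R] [StarRing R]
    [StarOrderedRing R] [Fintype m] [DecidableEq m] [Fintype n] (W : Matrix m n R) :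
    (W * Wᴴ).PosDef ↔ Function.Injective W.vecMul := by
  refine ⟨fun h => ?_, PosDef.mul_conjTranspose_self W⟩
  have hG : Function.Injective (W * Wᴴ).vecMul := vecMul_injective_iff_isUnit.mpr h.isUnit
  refine Function.Injective.of_comp (f := (Wᴴ).vecMul) ?_
  simpa only [Function.comp_def, vecMul_vecMul] using hG

theorem vecMul_injective_iff_forall_mul_eq_zero [CommRing R] [Fintype m] [Nonempty ι]
    (W : Matrix m n R) :
    Function.Injective W.vecMul ↔ ∀ C : Matrix ι m R, C * W = 0 → C = 0 := by
  change Function.Injective (vecMulLinear W) ↔ _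
  simp only [injective_iff_map_eq_zero, vecMulLinear_apply]
  refine ⟨fun h C hC => funext fun i => h (C i) ?_, fun h x hx => ?_⟩
  · rw [← mul_apply_eq_vecMul, hC]; rfl
  · simpa using h (replicateRow ι x) (by rw [← replicateRow_vecMul, hx, replicateRow_zero])

theorem forall_mul_add_mul_eq_imp_eq_iff [Ring R] [Fintype n] [Fintype m]
    (Z : Matrix n k R) (U : Matrix m k R) (A₀ : Matrix ι n R) (B₀ : Matrix ι m R) :
    (∀ (A : Matrix ι n R) (B : Matrix ι m R), A * Z + B * U = A₀ * Z + B₀ * U → B = B₀) ↔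
      ∀ C : Matrix ι m R, (∃ A : Matrix ι n R, C * U = A * Z) → C = 0 := by
  refine ⟨fun h C ⟨A, hCA⟩ => ?_, fun h A B hAB => ?_⟩
  · have := h (A₀ + A) (B₀ - C) (by rw [Matrix.add_mul, Matrix.sub_mul, hCA]; abel)
    simpa using this
  · refine sub_eq_zero.mp (h (B - B₀) ⟨A₀ - A, ?_⟩)
    rw [Matrix.sub_mul, Matrix.sub_mul]
    linear_combination (norm := abel) hAB

section ResidualMaker

variable [CommRing R] [Fintype n] [Fintype k] [DecidableEq n] [DecidableEq k]

noncomputable def residualMaker (Z : Matrix n k R) : Matrix k k R := 1 - Zᵀ * (Z * Zᵀ)⁻¹ * Z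

variable {Z : Matrix n k R}

theorem transpose_residualMaker : (residualMaker Z)ᵀ = residualMaker Z := by
  simp only [residualMaker, transpose_sub, transpose_one, transpose_mul, transpose_transpose,
    transpose_nonsing_inv, Matrix.mul_assoc]

variable (hZ : IsUnit (Z * Zᵀ).det)
include hZ

theorem mul_residualMaker : Z * residualMaker Z = 0 := by
  rw [residualMaker, Matrix.mul_sub, Matrix.mul_one, ← Matrix.mul_assoc, ← Matrix.mul_assoc,
    mul_nonsing_inv _ hZ, Matrix.one_mul, sub_self]

theorem residualMaker_mul_self : residualMaker Z * residualMaker Z = residualMaker Z := by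
  nth_rw 1 [residualMaker]
  rw [Matrix.sub_mul, Matrix.one_mul, Matrix.mul_assoc _ Z, mul_residualMaker hZ, Matrix.mul_zero,
    sub_zero]

theorem mul_residualMaker_mul_transpose (U : Matrix m k R) :
    U * residualMaker Z * Uᵀ = U * residualMaker Z * (U * residualMaker Z)ᵀ := by
  rw [transpose_mul, transpose_residualMaker, ← Matrix.mul_assoc (U * _),
    Matrix.mul_assoc U _ (residualMaker Z), residualMaker_mul_self hZ]

theorem mul_residualMaker_eq_zero_iff {C : Matrix ι k R} :
    C * residualMaker Z = 0 ↔ ∃ A : Matrix ι n R, C = A * Z := by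
  refine ⟨fun h => ⟨C * Zᵀ * (Z * Zᵀ)⁻¹, ?_⟩, ?_⟩
  · rw [residualMaker, Matrix.mul_sub, Matrix.mul_one, sub_eq_zero] at h
    exact h.trans (by simp only [Matrix.mul_assoc])
  · rintro ⟨A, rfl⟩
    rw [Matrix.mul_assoc, mul_residualMaker hZ, Matrix.mul_zero]

end ResidualMaker

end Matrix

theorem control_channel_identifiable_iff_posDef_general
    (d m q N : ℕ) (hq : 1 ≤ q)
    (Z : Matrix (Fin d) (Fin N) ℝ) (U : Matrix (Fin m) (Fin N) ℝ)
    (hZ : IsUnit (Z * Zᵀ).det)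
    (P_Z : Matrix (Fin N) (Fin N) ℝ) (hP : P_Z = Zᵀ * (Z * Zᵀ)⁻¹ * Z)
    (M_Z : Matrix (Fin N) (Fin N) ℝ) (hM : M_Z = 1 - P_Z)
    (Astar : Matrix (Fin q) (Fin d) ℝ) (Bstar : Matrix (Fin q) (Fin m) ℝ) :
    (∀ (A : Matrix (Fin q) (Fin d) ℝ) (B : Matrix (Fin q) (Fin m) ℝ),
        A * Z + B * U = Astar * Z + Bstar * U → B = Bstar)
      ↔ (U * M_Z * Uᵀ).PosDef := by
  obtain rfl : M_Z = residualMaker Z := by rw [hM, hP, residualMaker]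
  have : Nonempty (Fin q) := ⟨⟨0, hq⟩⟩
  rw [forall_mul_add_mul_eq_imp_eq_iff, mul_residualMaker_mul_transpose hZ,
    ← conjTranspose_eq_transpose_of_trivial, posDef_mul_conjTranspose_self_iff,
    vecMul_injective_iff_forall_mul_eq_zero (ι := Fin q)]
  simp_rw [← Matrix.mul_assoc, mul_residualMaker_eq_zero_iff hZ]

/-- With `Z Zᵀ` invertible and `q ≥ 1`, sample-identifiability of the
control channel `B` is equivalent to positive definiteness of `U M_Z Uᵀ`. -/
theorem control_channel_identifiable_iff_posDef
    (d m q N : ℕ) (hq : 1 ≤ q) (hN : 1 ≤ N)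
    (Z : Matrix (Fin d) (Fin N) ℝ) (U : Matrix (Fin m) (Fin N) ℝ)
    (hZ : IsUnit (Z * Zᵀ).det)
    (P_Z : Matrix (Fin N) (Fin N) ℝ) (hP : P_Z = Zᵀ * (Z * Zᵀ)⁻¹ * Z)
    (M_Z : Matrix (Fin N) (Fin N) ℝ) (hM : M_Z = 1 - P_Z)
    (Astar : Matrix (Fin q) (Fin d) ℝ) (Bstar : Matrix (Fin q) (Fin m) ℝ) :
    (∀ (A : Matrix (Fin q) (Fin d) ℝ) (B : Matrix (Fin q) (Fin m) ℝ),
        A * Z + B * U = Astar * Z + Bstar * U → B = Bstar)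
      ↔ (U * M_Z * Uᵀ).PosDef :=
  control_channel_identifiable_iff_posDef_general d m q N hq Z U hZ P_Z hP M_Z hM Astar Bstar
end

section
/- Suppose Z Zᵀ is invertible and U_⊥ U_⊥ᵀ is invertible, where U_⊥ = U M_Z, and suppose Y = A⋆ Z + B⋆ U + R + E for matrices A⋆ ∈ ℝ^{q×d}, B⋆ ∈ ℝ^{q×m}, R, E ∈ ℝ^{q×N}. Then the estimator B̂ = Y M_Z U_⊥ᵀ (U_⊥ U_⊥ᵀ)⁻¹ satisfies B̂ − B⋆ = (R + E) M_Z U_⊥ᵀ (U_⊥ U_⊥ᵀ)⁻¹. -/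
open Matrix

/-- Error decomposition for the residualized B-estimator:
`B̂ - B⋆ = (R + E) M_Z U_⊥ᵀ (U_⊥ U_⊥ᵀ)⁻¹`. -/
theorem b_hat_error_decomposition
    (d m q N : ℕ) (hN : 1 ≤ N)
    (Z : Matrix (Fin d) (Fin N) ℝ) (U : Matrix (Fin m) (Fin N) ℝ)
    (Y : Matrix (Fin q) (Fin N) ℝ)
    (Astar : Matrix (Fin q) (Fin d) ℝ) (Bstar : Matrix (Fin q) (Fin m) ℝ)
    (R E : Matrix (Fin q) (Fin N) ℝ)
    (hZ : IsUnit (Z * Zᵀ).det)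
    (P_Z : Matrix (Fin N) (Fin N) ℝ) (hP : P_Z = Zᵀ * (Z * Zᵀ)⁻¹ * Z)
    (M_Z : Matrix (Fin N) (Fin N) ℝ) (hM : M_Z = 1 - P_Z)
    (Uperp : Matrix (Fin m) (Fin N) ℝ) (hUp : Uperp = U * M_Z)
    (hUpinv : IsUnit (Uperp * Uperpᵀ).det)
    (hY : Y = Astar * Z + Bstar * U + R + E)
    (Bhat : Matrix (Fin q) (Fin m) ℝ)
    (hB : Bhat = Y * M_Z * Uperpᵀ * (Uperp * Uperpᵀ)⁻¹) :
    Bhat - Bstar = (R + E) * M_Z * Uperpᵀ * (Uperp * Uperpᵀ)⁻¹ := by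
  have hZM : Z * M_Z = 0 := by
    have h1 : (Z * Zᵀ) * (Z * Zᵀ)⁻¹ = 1 := mul_nonsing_inv _ hZ
    rw [hM, hP, Matrix.mul_sub, Matrix.mul_one,
      show Z * (Zᵀ * (Z * Zᵀ)⁻¹ * Z) = ((Z * Zᵀ) * (Z * Zᵀ)⁻¹) * Z by
        simp only [Matrix.mul_assoc],
      h1, Matrix.one_mul, sub_self]
  have hBU : Bstar * Uperp * Uperpᵀ * (Uperp * Uperpᵀ)⁻¹ = Bstar := by
    rw [Matrix.mul_assoc, Matrix.mul_assoc, ← Matrix.mul_assoc Uperp,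
      mul_nonsing_inv _ hUpinv, Matrix.mul_one]
  have hYM : Y * M_Z = Bstar * Uperp + (R + E) * M_Z := by
    rw [hY, hUp, Matrix.add_mul, Matrix.add_mul, Matrix.add_mul,
      Matrix.mul_assoc Astar, hZM, Matrix.mul_zero, zero_add,
      Matrix.mul_assoc Bstar, Matrix.add_mul]
    abel
  rw [hB, hYM, Matrix.add_mul, Matrix.add_mul, hBU]
  abel
end

section
/- Suppose Z Zᵀ is invertible. Then the matrix U M_Z Uᵀ fails to be positive definite if and only if there exist a vector a ∈ ℝ^m with a ≠ 0 and a vector h ∈ ℝ^d such that aᵀ U = hᵀ Z (i.e., the input combination aᵀ U lies in the row span of the lifted-state data Z). -/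
/-!
`M_Z` is a symmetric idempotent, so `U M_Z Uᵀ = (M_Z Uᵀ)ᵀ (M_Z Uᵀ)` is a Gram matrix, positive
definite exactly when `M_Z Uᵀ` has trivial kernel. Since `M_Z v = 0` says `v = P_Z v` and `P_Z`
projects onto the column space of `Zᵀ`, a nonzero `a` with `M_Z Uᵀ a = 0` is the same as a
nonzero `a` with `Uᵀ a = Zᵀ h` for some `h`.
-/

open Matrix

namespace Matrix

variable {m n k R : Type*} [Fintype n]

theorem posDef_conjTranspose_mul_self_iff [Fintype m] [Ring R] [PartialOrder R] [StarRing R]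
    [StarOrderedRing R] [NoZeroDivisors R] (A : Matrix m n R) :
    (Aᴴ * A).PosDef ↔ ∀ x, A *ᵥ x = 0 → x = 0 := by
  refine ⟨fun hA x hx ↦ ?_, fun hA ↦ PosDef.conjTranspose_mul_self A fun x y hxy ↦ ?_⟩
  · by_contra hx0
    have hpos := hA.dotProduct_mulVec_pos hx0
    rw [← mulVec_mulVec, hx, mulVec_zero, dotProduct_zero] at hpos
    exact lt_irrefl 0 hpos
  · exact sub_eq_zero.mp <| hA _ <| by rw [mulVec_sub, hxy, sub_self]

section Annihilator

variable [DecidableEq n] [Fintype k] [DecidableEq k] [CommRing R]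

/-- The matrix `M_Z` of the paper: the residual-maker of least squares on the rows of `Z`. -/
noncomputable def annihilator (Z : Matrix k n R) : Matrix n n R :=
  1 - Zᵀ * (Z * Zᵀ)⁻¹ * Z

variable {Z : Matrix k n R}

theorem annihilator_transpose (Z : Matrix k n R) : (annihilator Z)ᵀ = annihilator Z := by
  simp only [annihilator, transpose_sub, transpose_one, transpose_mul, transpose_transpose,
    transpose_nonsing_inv, Matrix.mul_assoc]

theorem annihilator_mul_transpose (hZ : IsUnit (Z * Zᵀ).det) : annihilator Z * Zᵀ = 0 := by
  rw [annihilator, Matrix.sub_mul, Matrix.one_mul, Matrix.mul_assoc, Matrix.mul_assoc,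
    nonsing_inv_mul _ hZ, Matrix.mul_one, sub_self]

theorem mul_annihilator (hZ : IsUnit (Z * Zᵀ).det) : Z * annihilator Z = 0 := by
  simpa only [transpose_mul, transpose_transpose, annihilator_transpose, transpose_zero]
    using congrArg transpose (annihilator_mul_transpose hZ)

theorem annihilator_mul_self (hZ : IsUnit (Z * Zᵀ).det) :
    annihilator Z * annihilator Z = annihilator Z := by
  conv_lhs => enter [1]; rw [annihilator]
  rw [Matrix.sub_mul, Matrix.one_mul, Matrix.mul_assoc, mul_annihilator hZ, Matrix.mul_zero,
    sub_zero]

theorem annihilator_mulVec_eq_zero_iff (hZ : IsUnit (Z * Zᵀ).det) (v : n → R) :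
    annihilator Z *ᵥ v = 0 ↔ ∃ h : k → R, Zᵀ *ᵥ h = v := by
  constructor
  · intro hv
    refine ⟨((Z * Zᵀ)⁻¹ * Z) *ᵥ v, ?_⟩
    rw [annihilator, sub_mulVec, one_mulVec, sub_eq_zero] at hv
    rw [mulVec_mulVec, ← Matrix.mul_assoc]
    exact hv.symm
  · rintro ⟨h, rfl⟩
    rw [mulVec_mulVec, annihilator_mul_transpose hZ, zero_mulVec]

theorem mul_annihilator_mul_transpose (hZ : IsUnit (Z * Zᵀ).det) (U : Matrix m n R) :
    U * annihilator Z * Uᵀ = (annihilator Z * Uᵀ)ᵀ * (annihilator Z * Uᵀ) := by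
  rw [transpose_mul, transpose_transpose, annihilator_transpose, ← Matrix.mul_assoc,
    Matrix.mul_assoc U (annihilator Z) (annihilator Z), annihilator_mul_self hZ]

end Annihilator

end Matrix

theorem not_posDef_iff_input_combination_in_row_span_general
    (d m N : ℕ)
    (Z : Matrix (Fin d) (Fin N) ℝ) (U : Matrix (Fin m) (Fin N) ℝ)
    (hZ : IsUnit (Z * Zᵀ).det)
    (P_Z : Matrix (Fin N) (Fin N) ℝ) (hP : P_Z = Zᵀ * (Z * Zᵀ)⁻¹ * Z)
    (M_Z : Matrix (Fin N) (Fin N) ℝ) (hM : M_Z = 1 - P_Z) :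
    ¬ (U * M_Z * Uᵀ).PosDef ↔
      ∃ (a : Fin m → ℝ), a ≠ 0 ∧ ∃ (h : Fin d → ℝ), a ᵥ* U = h ᵥ* Z := by
  obtain rfl : M_Z = annihilator Z := by rw [hM, hP, annihilator]
  rw [mul_annihilator_mul_transpose hZ, ← conjTranspose_eq_transpose_of_trivial,
    posDef_conjTranspose_mul_self_iff]
  push Not
  refine exists_congr fun a ↦ ?_
  rw [and_comm, ← mulVec_mulVec, annihilator_mulVec_eq_zero_iff hZ]
  simp only [mulVec_transpose, eq_comm]

/-- With `Z Zᵀ` invertible, `U M_Z Uᵀ` fails to be positive definite iff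
some nontrivial input combination `aᵀ U` lies in the row span of `Z`, i.e.
`aᵀ U = hᵀ Z` for some `a ≠ 0` and some `h`. -/
theorem not_posDef_iff_input_combination_in_row_span
    (d m N : ℕ) (hN : 1 ≤ N)
    (Z : Matrix (Fin d) (Fin N) ℝ) (U : Matrix (Fin m) (Fin N) ℝ)
    (hZ : IsUnit (Z * Zᵀ).det)
    (P_Z : Matrix (Fin N) (Fin N) ℝ) (hP : P_Z = Zᵀ * (Z * Zᵀ)⁻¹ * Z)
    (M_Z : Matrix (Fin N) (Fin N) ℝ) (hM : M_Z = 1 - P_Z) :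
    ¬ (U * M_Z * Uᵀ).PosDef ↔
      ∃ (a : Fin m → ℝ), a ≠ 0 ∧ ∃ (h : Fin d → ℝ), a ᵥ* U = h ᵥ* Z :=
  not_posDef_iff_input_combination_in_row_span_general d m N Z U hZ P_Z hP M_Z hM
end

section
/- Suppose Z Zᵀ is invertible, U_⊥ U_⊥ᵀ is invertible where U_⊥ = U M_Z, and Y = A⋆ Z + B⋆ U + R + E. Then the estimator B̂ = Y M_Z U_⊥ᵀ (U_⊥ U_⊥ᵀ)⁻¹ satisfies the operator-norm bound ‖B̂ − B⋆‖ ≤ ‖(R + E) M_Z‖ / sqrt(λ_min(U_⊥ U_⊥ᵀ)), where λ_min denotes the smallest eigenvalue of the positive definite matrix U_⊥ U_⊥ᵀ. -/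
/-!
Since `Z M_Z = 0`, the `A⋆ Z` term of `Y` is killed by `M_Z` and `Y M_Z = B⋆ U_⊥ + (R + E) M_Z`,
so `B̂ - B⋆ = (R + E) M_Z T` with `T = U_⊥ᵀ (U_⊥ U_⊥ᵀ)⁻¹`. The Gram matrix `Tᵀ T` is
`(U_⊥ U_⊥ᵀ)⁻¹`, hence `‖T‖² = ‖(U_⊥ U_⊥ᵀ)⁻¹‖ = 1 / λ_min(U_⊥ U_⊥ᵀ)`.
-/

open Matrix
open scoped Matrix.Norms.L2Operator

/-- Smallest eigenvalue of a symmetric real matrix (junk value `0` otherwise). -/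
noncomputable def lambdaMin {n : Type*} [Fintype n] [DecidableEq n]
    (M : Matrix n n ℝ) : ℝ :=
  if h : M.IsHermitian then ⨅ i, h.eigenvalues i else 0

namespace Matrix

section CommRing

variable {R k n : Type*} [CommRing R] [Fintype k] [DecidableEq k] [Fintype n]

lemma mul_one_sub_transpose_mul_inv_mul_eq_zero [DecidableEq n] (Z : Matrix k n R)
    (hZ : IsUnit (Z * Zᵀ).det) :
    Z * (1 - Zᵀ * (Z * Zᵀ)⁻¹ * Z) = 0 := by
  rw [Matrix.mul_sub, Matrix.mul_one, ← Matrix.mul_assoc, ← Matrix.mul_assoc,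
    mul_nonsing_inv _ hZ, Matrix.one_mul, sub_self]

lemma add_mul_transpose_mul_inv_sub_eq {l : Type*} (B : Matrix l k R) (V : Matrix k n R)
    (W : Matrix l n R) (hV : IsUnit (V * Vᵀ).det) :
    (B * V + W) * Vᵀ * (V * Vᵀ)⁻¹ - B = W * (Vᵀ * (V * Vᵀ)⁻¹) := by
  rw [Matrix.add_mul, Matrix.add_mul, Matrix.mul_assoc B, Matrix.mul_assoc B,
    mul_nonsing_inv _ hV, Matrix.mul_one, Matrix.mul_assoc W, add_sub_cancel_left]

end CommRing

variable {n : Type*} [Fintype n] [DecidableEq n]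

lemma lambdaMin_le_of_mem_spectrum {S : Matrix n n ℝ} (hS : S.IsHermitian) {x : ℝ}
    (hx : x ∈ spectrum ℝ S) : lambdaMin S ≤ x := by
  obtain ⟨i, rfl⟩ := hS.spectrum_real_eq_range_eigenvalues ▸ hx
  rw [lambdaMin, dif_pos hS]
  exact ciInf_le (Set.finite_range _).bddBelow i

lemma PosSemidef.lambdaMin_nonneg {S : Matrix n n ℝ} (hS : S.PosSemidef) :
    0 ≤ lambdaMin S := by
  rw [lambdaMin, dif_pos hS.isHermitian]
  exact Real.iInf_nonneg hS.eigenvalues_nonneg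

lemma PosDef.lambdaMin_pos [Nonempty n] {S : Matrix n n ℝ} (hS : S.PosDef) :
    0 < lambdaMin S := by
  rw [lambdaMin, dif_pos hS.isHermitian]
  obtain ⟨i, hi⟩ := exists_eq_ciInf_of_finite (f := hS.isHermitian.eigenvalues)
  exact hi ▸ hS.eigenvalues_pos i

lemma PosDef.l2_opNorm_inv_le {S : Matrix n n ℝ} (hS : S.PosDef) :
    ‖S⁻¹‖ ≤ (lambdaMin S)⁻¹ := by
  -- `S⁻¹ = cfc (·⁻¹) S`, whose norm is the largest `|x⁻¹|` over the spectrum of `S`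
  rw [nonsing_inv_eq_ringInverse,
    ← cfc_ringInverse_id (R := ℝ) S hS.isUnit hS.isHermitian.isSelfAdjoint]
  refine norm_cfc_le (inv_nonneg.2 hS.posSemidef.lambdaMin_nonneg) fun x hx ↦ ?_
  obtain ⟨i, -⟩ := hS.isHermitian.spectrum_real_eq_range_eigenvalues ▸ hx
  have : Nonempty n := ⟨i⟩
  have hmin := lambdaMin_le_of_mem_spectrum hS.isHermitian hx
  rw [Real.norm_of_nonneg (inv_nonneg.2 (hS.lambdaMin_pos.le.trans hmin))]
  exact inv_anti₀ hS.lambdaMin_pos hmin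

lemma l2_opNorm_transpose_mul_inv_le {m : Type*} [Fintype m] (A : Matrix n m ℝ)
    (hA : IsUnit (A * Aᵀ).det) :
    ‖Aᵀ * (A * Aᵀ)⁻¹‖ ≤ (√(lambdaMin (A * Aᵀ)))⁻¹ := by
  have hS : (A * Aᵀ).PosDef := by
    rw [← conjTranspose_eq_transpose_of_trivial] at hA ⊢
    exact (posSemidef_self_mul_conjTranspose A).posDef_iff_isUnit.2
      ((isUnit_iff_isUnit_det _).2 hA)
  have hgram : (Aᵀ * (A * Aᵀ)⁻¹)ᴴ * (Aᵀ * (A * Aᵀ)⁻¹) = (A * Aᵀ)⁻¹ := by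
    rw [conjTranspose_eq_transpose_of_trivial, transpose_mul, transpose_transpose,
      transpose_nonsing_inv, transpose_mul, transpose_transpose, Matrix.mul_assoc,
      ← Matrix.mul_assoc A, mul_nonsing_inv _ hA, Matrix.mul_one]
  rw [← Real.sqrt_inv,
    Real.le_sqrt (norm_nonneg _) (inv_nonneg.2 hS.posSemidef.lambdaMin_nonneg), sq,
    ← l2_opNorm_conjTranspose_mul_self, hgram]
  exact hS.l2_opNorm_inv_le

end Matrix

theorem b_hat_operator_norm_bound_general
    (d m q N : ℕ)
    (Z : Matrix (Fin d) (Fin N) ℝ) (U : Matrix (Fin m) (Fin N) ℝ)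
    (Y : Matrix (Fin q) (Fin N) ℝ)
    (Astar : Matrix (Fin q) (Fin d) ℝ) (Bstar : Matrix (Fin q) (Fin m) ℝ)
    (R E : Matrix (Fin q) (Fin N) ℝ)
    (hZ : IsUnit (Z * Zᵀ).det)
    (P_Z : Matrix (Fin N) (Fin N) ℝ) (hP : P_Z = Zᵀ * (Z * Zᵀ)⁻¹ * Z)
    (M_Z : Matrix (Fin N) (Fin N) ℝ) (hM : M_Z = 1 - P_Z)
    (Uperp : Matrix (Fin m) (Fin N) ℝ) (hUp : Uperp = U * M_Z)
    (hUpinv : IsUnit (Uperp * Uperpᵀ).det)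
    (hY : Y = Astar * Z + Bstar * U + R + E)
    (Bhat : Matrix (Fin q) (Fin m) ℝ)
    (hB : Bhat = Y * M_Z * Uperpᵀ * (Uperp * Uperpᵀ)⁻¹) :
    ‖Bhat - Bstar‖ ≤ ‖(R + E) * M_Z‖ / Real.sqrt (lambdaMin (Uperp * Uperpᵀ)) := by
  have hZM : Z * M_Z = 0 := hM ▸ hP ▸ mul_one_sub_transpose_mul_inv_mul_eq_zero Z hZ
  have hYM : Y * M_Z = Bstar * Uperp + (R + E) * M_Z := by
    rw [hY, hUp, add_assoc _ R, Matrix.add_mul, Matrix.add_mul, Matrix.mul_assoc Astar, hZM,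
      Matrix.mul_zero, zero_add, Matrix.mul_assoc]
  have hBhat : Bhat - Bstar = (R + E) * M_Z * (Uperpᵀ * (Uperp * Uperpᵀ)⁻¹) := by
    rw [hB, hYM, add_mul_transpose_mul_inv_sub_eq _ _ _ hUpinv]
  rw [hBhat, div_eq_mul_inv]
  calc _ ≤ ‖(R + E) * M_Z‖ * ‖Uperpᵀ * (Uperp * Uperpᵀ)⁻¹‖ := l2_opNorm_mul _ _
    _ ≤ _ := by gcongr; exact l2_opNorm_transpose_mul_inv_le Uperp hUpinv

/-- spectral-norm error bound for the residualized B-estimator: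
`‖B̂ - B⋆‖ ≤ ‖(R + E) M_Z‖ / sqrt(λ_min(U_⊥ U_⊥ᵀ))`. -/
theorem b_hat_operator_norm_bound
    (d m q N : ℕ) (hN : 1 ≤ N)
    (Z : Matrix (Fin d) (Fin N) ℝ) (U : Matrix (Fin m) (Fin N) ℝ)
    (Y : Matrix (Fin q) (Fin N) ℝ)
    (Astar : Matrix (Fin q) (Fin d) ℝ) (Bstar : Matrix (Fin q) (Fin m) ℝ)
    (R E : Matrix (Fin q) (Fin N) ℝ)
    (hZ : IsUnit (Z * Zᵀ).det)
    (P_Z : Matrix (Fin N) (Fin N) ℝ) (hP : P_Z = Zᵀ * (Z * Zᵀ)⁻¹ * Z)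
    (M_Z : Matrix (Fin N) (Fin N) ℝ) (hM : M_Z = 1 - P_Z)
    (Uperp : Matrix (Fin m) (Fin N) ℝ) (hUp : Uperp = U * M_Z)
    (hUpinv : IsUnit (Uperp * Uperpᵀ).det)
    (hY : Y = Astar * Z + Bstar * U + R + E)
    (Bhat : Matrix (Fin q) (Fin m) ℝ)
    (hB : Bhat = Y * M_Z * Uperpᵀ * (Uperp * Uperpᵀ)⁻¹) :
    ‖Bhat - Bstar‖ ≤ ‖(R + E) * M_Z‖ / Real.sqrt (lambdaMin (Uperp * Uperpᵀ)) :=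
  b_hat_operator_norm_bound_general d m q N Z U Y Astar Bstar R E hZ P_Z hP M_Z hM Uperp hUp hUpinv
    hY Bhat hB
end

section
/- Let V ∈ ℝ^{(d+m)×(d+m)} be symmetric positive definite with block decomposition V = [[V₁₁, V₁₂],[V₂₁, V₂₂]] (V₁₁ of size d×d, V₂₂ of size m×m), let S = V₂₂ − V₂₁ V₁₁⁻¹ V₁₂ be the Schur complement of V₁₁ (which is positive definite), and let P_u = [0; I_m] ∈ ℝ^{(d+m)×m} be the injection of the last m coordinates. Then for every matrix T ∈ ℝ^{q×(d+m)}, ‖T V⁻¹ P_u‖ ≤ ‖T V^{−1/2}‖ / sqrt(λ_min(S)), where V^{1/2} denotes the positive definite square root of V. -/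
/-!
With `W = V^{-1/2}` we have `T V⁻¹ P_u = (T W) (W P_u)`, and
`(W P_u)ᵀ (W P_u) = P_uᵀ V⁻¹ P_u` is the lower right block of `V⁻¹`, which the block inversion
formula identifies with `S⁻¹`. Hence `‖W P_u‖² = ‖S⁻¹‖`, the largest eigenvalue `1 / λ_min(S)`
of `S⁻¹`. The same identity shows that `S⁻¹`, a principal submatrix of the positive definite
`V⁻¹`, is positive definite.
-/

open Matrix
open scoped Matrix.Norms.L2Operator

/-- The positive semidefinite square root of a positive semidefinite matrix
(the definition `Matrix.PosSemidef.sqrt` of the older Mathlib, since removed). -/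
noncomputable def Matrix.PosSemidef.sqrt {n : Type*} [Fintype n] [DecidableEq n]
    {A : Matrix n n ℝ} (hA : A.PosSemidef) : Matrix n n ℝ :=
  hA.1.eigenvectorUnitary.1 * diagonal ((↑) ∘ (√·) ∘ hA.1.eigenvalues) *
  (star hA.1.eigenvectorUnitary : Matrix n n ℝ)

open Classical in
/-- The positive semidefinite square root of a real matrix
(junk value `0` if the matrix is not positive semidefinite). -/
noncomputable def matSqrt {n : Type*} [Fintype n] [DecidableEq n]
    (M : Matrix n n ℝ) : Matrix n n ℝ :=
  if h : M.PosSemidef then h.sqrt else 0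

open scoped MatrixOrder

namespace Matrix

section Spectral

variable {n : Type*} [Fintype n] [DecidableEq n]

lemma matSqrt_eq_cfcSqrt {A : Matrix n n ℝ} (hA : A.PosSemidef) : matSqrt A = CFC.sqrt A := by
  rw [matSqrt, dif_pos hA, CFC.sqrt_eq_real_sqrt A hA.nonneg, cfcₙ_eq_cfc, hA.1.cfc_eq,
    IsHermitian.cfc, Unitary.conjStarAlgAut_apply, PosSemidef.sqrt]
  rfl

lemma lambdaMin_le_eigenvalues {A : Matrix n n ℝ} (hA : A.IsHermitian) (i : n) :
    lambdaMin A ≤ hA.eigenvalues i := by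
  rw [lambdaMin, dif_pos hA]
  exact ciInf_le (Set.finite_range _).bddBelow i

lemma PosSemidef.lambdaMin_nonneg_s13 {A : Matrix n n ℝ} (hA : A.PosSemidef) : 0 ≤ lambdaMin A := by
  rw [lambdaMin, dif_pos hA.1]
  exact Real.iInf_nonneg hA.eigenvalues_nonneg

lemma PosDef.lambdaMin_pos_s13 [Nonempty n] {A : Matrix n n ℝ} (hA : A.PosDef) :
    0 < lambdaMin A := by
  rw [lambdaMin, dif_pos hA.1]
  obtain ⟨i, hi⟩ := exists_eq_ciInf_of_finite (f := hA.1.eigenvalues)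
  exact hi ▸ hA.eigenvalues_pos i

lemma IsHermitian.l2_opNorm_cfc {A : Matrix n n ℝ} (hA : A.IsHermitian) (f : ℝ → ℝ) :
    ‖cfc f A‖ = ‖f ∘ hA.eigenvalues‖ := by
  rw [hA.cfc_eq, IsHermitian.cfc, Unitary.conjStarAlgAut_apply,
    CStarRing.norm_mul_mem_unitary _ (Unitary.star_mem hA.eigenvectorUnitary.2),
    CStarRing.norm_coe_unitary_mul, l2_opNorm_diagonal]
  rfl

lemma PosDef.l2_opNorm_inv_le_s13 {A : Matrix n n ℝ} (hA : A.PosDef) :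
    ‖A⁻¹‖ ≤ (lambdaMin A)⁻¹ := by
  have hinv : A⁻¹ = cfc (·⁻¹ : ℝ → ℝ) A := by
    rw [cfc_ringInverse_id A hA.isUnit, nonsing_inv_eq_ringInverse]
  rw [hinv, hA.1.l2_opNorm_cfc]
  refine pi_norm_le_iff_of_nonneg ?_ |>.mpr fun i ↦ ?_
  · exact inv_nonneg.mpr hA.posSemidef.lambdaMin_nonneg_s13
  · have : Nonempty n := ⟨i⟩
    rw [Function.comp_apply, Real.norm_eq_abs, abs_inv, abs_of_pos (hA.eigenvalues_pos i)]
    exact inv_anti₀ hA.lambdaMin_pos_s13 (lambdaMin_le_eigenvalues hA.1 i)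

end Spectral

section Blocks

variable {m n α : Type*} [Fintype m] [Fintype n] [DecidableEq m] [DecidableEq n]

noncomputable def blockSchurComplement [CommRing α] (V : Matrix (m ⊕ n) (m ⊕ n) α) :
    Matrix n n α :=
  toBlocks₂₂ V - toBlocks₂₁ V * (toBlocks₁₁ V)⁻¹ * toBlocks₁₂ V

lemma toBlocks₂₂_inv [CommRing α] {V : Matrix (m ⊕ n) (m ⊕ n) α}
    (hV : IsUnit V) (h₁₁ : IsUnit (toBlocks₁₁ V)) :
    toBlocks₂₂ V⁻¹ = (blockSchurComplement V)⁻¹ := by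
  obtain ⟨A, B, C, D, rfl⟩ : ∃ A B C D, V = fromBlocks A B C D :=
    ⟨_, _, _, _, (fromBlocks_toBlocks V).symm⟩
  rw [toBlocks_fromBlocks₁₁] at h₁₁
  let := h₁₁.invertible
  let := hV.invertible
  let := invertibleOfFromBlocks₁₁Invertible A B C D
  simpa [blockSchurComplement, invOf_eq_nonsing_inv] using
    congrArg toBlocks₂₂ (invOf_fromBlocks₁₁_eq A B C D)

lemma PosDef.blockSchurComplement {V : Matrix (m ⊕ n) (m ⊕ n) ℝ} (hV : V.PosDef) :
    (blockSchurComplement V).PosDef := by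
  have h₁₁ : (toBlocks₁₁ V).PosDef := hV.submatrix Sum.inl_injective
  rw [← posDef_inv_iff, ← toBlocks₂₂_inv hV.isUnit h₁₁.isUnit]
  exact hV.inv.submatrix Sum.inr_injective

omit [DecidableEq m] in
lemma conjTranspose_fromRows_zero_one_mul_mul [Semiring α] [StarRing α]
    (M : Matrix (m ⊕ n) (m ⊕ n) α) :
    (fromRows (0 : Matrix m n α) (1 : Matrix n n α))ᴴ * M *
      fromRows (0 : Matrix m n α) (1 : Matrix n n α) = toBlocks₂₂ M := by
  rw [← fromBlocks_toBlocks M, conjTranspose_fromRows_eq_fromCols_conjTranspose,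
    fromCols_mul_fromBlocks, fromCols_mul_fromRows]
  simp

lemma l2_opNorm_sqrt_inv_mul_fromRows_le {V : Matrix (m ⊕ n) (m ⊕ n) ℝ} (hV : V.PosDef) :
    ‖CFC.sqrt V⁻¹ * fromRows (0 : Matrix m n ℝ) (1 : Matrix n n ℝ)‖ ≤
      (√(lambdaMin (blockSchurComplement V)))⁻¹ := by
  set P := fromRows (0 : Matrix m n ℝ) (1 : Matrix n n ℝ)
  set S := blockSchurComplement V
  have hN : (CFC.sqrt V⁻¹ * P)ᴴ * (CFC.sqrt V⁻¹ * P) = S⁻¹ := by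
    rw [conjTranspose_mul, ← star_eq_conjTranspose, (CFC.sqrt_nonneg V⁻¹).isSelfAdjoint.star_eq,
      Matrix.mul_assoc, ← Matrix.mul_assoc (CFC.sqrt _),
      CFC.sqrt_mul_sqrt_self V⁻¹ hV.inv.posSemidef.nonneg, ← Matrix.mul_assoc,
      conjTranspose_fromRows_zero_one_mul_mul,
      toBlocks₂₂_inv hV.isUnit (hV.submatrix Sum.inl_injective).isUnit]
  calc ‖CFC.sqrt V⁻¹ * P‖ = √(‖CFC.sqrt V⁻¹ * P‖ * ‖CFC.sqrt V⁻¹ * P‖) :=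
        (Real.sqrt_mul_self (norm_nonneg _)).symm
    _ = √‖S⁻¹‖ := by rw [← hN, l2_opNorm_conjTranspose_mul_self]
    _ ≤ √(lambdaMin S)⁻¹ := Real.sqrt_le_sqrt hV.blockSchurComplement.l2_opNorm_inv_le_s13
    _ = (√(lambdaMin S))⁻¹ := Real.sqrt_inv _

end Blocks

end Matrix

/-- For a positive definite block matrix `V` with Schur complement
`S = V₂₂ - V₂₁ V₁₁⁻¹ V₁₂` (which is positive definite) and the injection `P_u` of the
last `m` coordinates, every `T` satisfies `‖T V⁻¹ P_u‖ ≤ ‖T V^{-1/2}‖ / sqrt(λ_min(S))`. -/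
theorem schur_denominator_bound
    (d m q : ℕ)
    (V : Matrix (Fin d ⊕ Fin m) (Fin d ⊕ Fin m) ℝ) (hV : V.PosDef)
    (S : Matrix (Fin m) (Fin m) ℝ)
    (hS : S = Matrix.toBlocks₂₂ V -
        Matrix.toBlocks₂₁ V * (Matrix.toBlocks₁₁ V)⁻¹ * Matrix.toBlocks₁₂ V)
    (Pu : Matrix (Fin d ⊕ Fin m) (Fin m) ℝ)
    (hPu : Pu = Matrix.fromRows (0 : Matrix (Fin d) (Fin m) ℝ)
        (1 : Matrix (Fin m) (Fin m) ℝ)) :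
    S.PosDef ∧
      ∀ T : Matrix (Fin q) (Fin d ⊕ Fin m) ℝ,
        ‖T * V⁻¹ * Pu‖ ≤ ‖T * (matSqrt V)⁻¹‖ / Real.sqrt (lambdaMin S) := by
  obtain rfl : S = blockSchurComplement V := hS
  refine ⟨hV.blockSchurComplement, fun T ↦ ?_⟩
  have hW : (matSqrt V)⁻¹ = CFC.sqrt V⁻¹ := by
    rw [matSqrt_eq_cfcSqrt hV.posSemidef, hV.posSemidef.inv_sqrt]
  rw [hW, div_eq_mul_inv]
  calc ‖T * V⁻¹ * Pu‖
      = ‖T * CFC.sqrt V⁻¹ * (CFC.sqrt V⁻¹ * Pu)‖ := by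
        rw [Matrix.mul_assoc T (CFC.sqrt _), ← Matrix.mul_assoc (CFC.sqrt _) (CFC.sqrt _),
          CFC.sqrt_mul_sqrt_self V⁻¹ hV.inv.posSemidef.nonneg, Matrix.mul_assoc]
    _ ≤ ‖T * CFC.sqrt V⁻¹‖ * ‖CFC.sqrt V⁻¹ * Pu‖ := l2_opNorm_mul _ _
    _ ≤ ‖T * CFC.sqrt V⁻¹‖ * (√(lambdaMin (blockSchurComplement V)))⁻¹ := by
        gcongr
        exact hPu ▸ l2_opNorm_sqrt_inv_mul_fromRows_le hV
end

section
/- Let Â, A⋆ ∈ ℝ^{d×d}, B̂, B⋆ ∈ ℝ^{d×m}, L ∈ ℝ^{m×d}, and let P ∈ ℝ^{d×d} be symmetric positive definite and α > 0. Set F̂ = Â + B̂ L and F⋆ = A⋆ + B⋆ L, and let η_A ≥ ‖Â − A⋆‖, η_B ≥ ‖B̂ − B⋆‖, and η_cl = η_A + ‖L‖ η_B. Suppose F̂ᵀ P F̂ − P ⪯ −α I_d and 2 ‖P‖ ‖F̂‖ η_cl + ‖P‖ η_cl² ≤ α/2. Then F⋆ᵀ P F⋆ − P ⪯ −(α/2)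 I_d. -/
open Matrix
open scoped Matrix.Norms.L2Operator

/-!
Write `F⋆ = F̂ + E`; then `‖E‖ ≤ η_cl`. The Lyapunov difference changes by the symmetric matrix
`F̂ᵀ P E + Eᵀ P F̂ + Eᵀ P E`, whose spectral norm is at most `2 ‖P‖ ‖F̂‖ η_cl + ‖P‖ η_cl² ≤ α / 2`.
A symmetric matrix of norm at most `c` lies below `c • 1`, so the margin `α` loses at most `α / 2`.
-/

namespace ContinuousLinearMap

variable {𝕜 E : Type*} [RCLike 𝕜] [NormedAddCommGroup E] [InnerProductSpace 𝕜 E] [CompleteSpace E]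

theorem isPositive_smul_one_sub_of_norm_le {T : E →L[𝕜] E} (hT : IsSelfAdjoint T)
    {c : ℝ} (hc : ‖T‖ ≤ c) : ((c : 𝕜) • 1 - T).IsPositive := by
  refine ⟨isSelfAdjoint_iff_isSymmetric.mp
    ((IsSelfAdjoint.smul (RCLike.conj_ofReal c) (.one _)).sub hT), fun x => ?_⟩
  have hx : RCLike.re (inner 𝕜 (T x) x) ≤ c * ‖x‖ ^ 2 := calc
    _ ≤ ‖T x‖ * ‖x‖ := re_inner_le_norm _ _
    _ ≤ ‖T‖ * ‖x‖ * ‖x‖ := by gcongr; exact T.le_opNorm x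
    _ ≤ c * ‖x‖ ^ 2 := by rw [mul_assoc, ← sq]; gcongr
  simpa [reApplyInnerSelf_apply, inner_sub_left, inner_smul_left, inner_self_eq_norm_sq_to_K] using hx

end ContinuousLinearMap

namespace Matrix

open scoped ComplexOrder

variable {𝕜 : Type*} [RCLike 𝕜] {n m k : Type*} [Fintype n] [Fintype m] [DecidableEq m]
  [Fintype k] [DecidableEq k]

theorem l2_opNorm_add_mul_sub_add_mul_le (A₁ A₂ : Matrix n k 𝕜) (B₁ B₂ : Matrix n m 𝕜)
    (L : Matrix m k 𝕜) :
    ‖(A₂ + B₂ * L) - (A₁ + B₁ * L)‖ ≤ ‖A₁ - A₂‖ + ‖L‖ * ‖B₁ - B₂‖ := by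
  have hsplit : (A₂ + B₂ * L) - (A₁ + B₁ * L) = (A₂ - A₁) + (B₂ - B₁) * L := by
    rw [Matrix.sub_mul]; abel
  calc _ ≤ ‖A₂ - A₁‖ + ‖(B₂ - B₁) * L‖ := hsplit ▸ norm_add_le _ _
    _ ≤ ‖A₂ - A₁‖ + ‖B₂ - B₁‖ * ‖L‖ := by gcongr; exact l2_opNorm_mul _ _
    _ = _ := by rw [norm_sub_rev A₂, norm_sub_rev B₂, mul_comm]

variable [DecidableEq n]

theorem l2_opNorm_conjTranspose_mul_mul_add_sub_le (F E : Matrix n m 𝕜) (P : Matrix n n 𝕜) :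
    ‖(F + E)ᴴ * P * (F + E) - Fᴴ * P * F‖ ≤ 2 * ‖P‖ * ‖F‖ * ‖E‖ + ‖P‖ * ‖E‖ ^ 2 := by
  have hexpand : (F + E)ᴴ * P * (F + E) - Fᴴ * P * F = Fᴴ * P * E + Eᴴ * P * F + Eᴴ * P * E := by
    simp only [conjTranspose_add, Matrix.add_mul, Matrix.mul_add]; abel
  have hbound (X Y : Matrix n m 𝕜) : ‖Xᴴ * P * Y‖ ≤ ‖P‖ * ‖X‖ * ‖Y‖ := calc
    ‖Xᴴ * P * Y‖ ≤ ‖Xᴴ‖ * ‖P‖ * ‖Y‖ :=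
      (l2_opNorm_mul _ _).trans (by gcongr; exact l2_opNorm_mul _ _)
    _ = ‖P‖ * ‖X‖ * ‖Y‖ := by rw [l2_opNorm_conjTranspose]; ring
  rw [hexpand]
  calc _ ≤ ‖Fᴴ * P * E‖ + ‖Eᴴ * P * F‖ + ‖Eᴴ * P * E‖ := norm_add₃_le
    _ ≤ ‖P‖ * ‖F‖ * ‖E‖ + ‖P‖ * ‖E‖ * ‖F‖ + ‖P‖ * ‖E‖ * ‖E‖ := by
      gcongr <;> exact hbound _ _
    _ = _ := by ring

theorem IsHermitian.posSemidef_smul_one_sub_of_l2_opNorm_le {A : Matrix n n 𝕜}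
    (hA : A.IsHermitian) {c : ℝ} (hc : ‖A‖ ≤ c) : (c • (1 : Matrix n n 𝕜) - A).PosSemidef := by
  have h := ContinuousLinearMap.isPositive_smul_one_sub_of_norm_le
    (hA.isSelfAdjoint.map (toEuclideanCLM (n := n) (𝕜 := 𝕜))) hc
  rw [← isPositive_toEuclideanLin_iff, ← coe_toEuclideanCLM_eq_toEuclideanLin,
    ContinuousLinearMap.isPositive_toLinearMap_iff, RCLike.real_smul_eq_coe_smul (K := 𝕜),
    map_sub, map_smul, map_one]
  exact h

end Matrix

theorem lifted_feedback_robustness_general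
    (d m : ℕ)
    (Ahat Astar : Matrix (Fin d) (Fin d) ℝ)
    (Bhat Bstar : Matrix (Fin d) (Fin m) ℝ)
    (L : Matrix (Fin m) (Fin d) ℝ)
    (P : Matrix (Fin d) (Fin d) ℝ) (hP : P.PosDef)
    (α : ℝ)
    (Fhat Fstar : Matrix (Fin d) (Fin d) ℝ)
    (hFhat : Fhat = Ahat + Bhat * L) (hFstar : Fstar = Astar + Bstar * L)
    (ηA ηB ηcl : ℝ)
    (hηA : ‖Ahat - Astar‖ ≤ ηA) (hηB : ‖Bhat - Bstar‖ ≤ ηB)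
    (hηcl : ηcl = ηA + ‖L‖ * ηB)
    (hlyap : ((-α) • (1 : Matrix (Fin d) (Fin d) ℝ) -
        (Fhatᵀ * P * Fhat - P)).PosSemidef)
    (hmargin : 2 * ‖P‖ * ‖Fhat‖ * ηcl + ‖P‖ * ηcl ^ 2 ≤ α / 2) :
    ((-(α / 2)) • (1 : Matrix (Fin d) (Fin d) ℝ) -
        (Fstarᵀ * P * Fstar - P)).PosSemidef := by
  have hE : ‖Fstar - Fhat‖ ≤ ηcl := by
    subst hFhat hFstar hηcl
    refine (l2_opNorm_add_mul_sub_add_mul_le _ _ _ _ _).trans ?_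
    gcongr
  have hΔ : ‖Fstarᵀ * P * Fstar - Fhatᵀ * P * Fhat‖ ≤ α / 2 := by
    have h := l2_opNorm_conjTranspose_mul_mul_add_sub_le Fhat (Fstar - Fhat) P
    simp only [add_sub_cancel, conjTranspose_eq_transpose_of_trivial] at h
    refine h.trans (le_trans ?_ hmargin)
    have hηcl_nonneg : 0 ≤ ηcl := (norm_nonneg _).trans hE
    gcongr
  have hΔherm : (Fstarᵀ * P * Fstar - Fhatᵀ * P * Fhat).IsHermitian := by
    simp only [← conjTranspose_eq_transpose_of_trivial]
    exact (isHermitian_conjTranspose_mul_mul _ hP.isHermitian).sub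
      (isHermitian_conjTranspose_mul_mul _ hP.isHermitian)
  convert hlyap.add (hΔherm.posSemidef_smul_one_sub_of_l2_opNorm_le hΔ) using 1
  match_scalars <;> ring

/-- lifted feedback robustness: if `F̂ᵀ P F̂ - P ⪯ -α I` and
`2‖P‖‖F̂‖η_cl + ‖P‖η_cl² ≤ α/2` with `η_cl = η_A + ‖L‖η_B`, then the true closed loop
satisfies `F⋆ᵀ P F⋆ - P ⪯ -(α/2) I`. -/
theorem lifted_feedback_robustness
    (d m : ℕ)
    (Ahat Astar : Matrix (Fin d) (Fin d) ℝ)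
    (Bhat Bstar : Matrix (Fin d) (Fin m) ℝ)
    (L : Matrix (Fin m) (Fin d) ℝ)
    (P : Matrix (Fin d) (Fin d) ℝ) (hP : P.PosDef)
    (α : ℝ) (hα : 0 < α)
    (Fhat Fstar : Matrix (Fin d) (Fin d) ℝ)
    (hFhat : Fhat = Ahat + Bhat * L) (hFstar : Fstar = Astar + Bstar * L)
    (ηA ηB ηcl : ℝ)
    (hηA : ‖Ahat - Astar‖ ≤ ηA) (hηB : ‖Bhat - Bstar‖ ≤ ηB)
    (hηcl : ηcl = ηA + ‖L‖ * ηB)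
    (hlyap : ((-α) • (1 : Matrix (Fin d) (Fin d) ℝ) -
        (Fhatᵀ * P * Fhat - P)).PosSemidef)
    (hmargin : 2 * ‖P‖ * ‖Fhat‖ * ηcl + ‖P‖ * ηcl ^ 2 ≤ α / 2) :
    ((-(α / 2)) • (1 : Matrix (Fin d) (Fin d) ℝ) -
        (Fstarᵀ * P * Fstar - P)).PosSemidef :=
  lifted_feedback_robustness_general d m Ahat Astar Bhat Bstar L P hP α Fhat Fstar hFhat hFstar ηA
    ηB ηcl hηA hηB hηcl hlyap hmargin
end
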